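/- Let k, m ∈ ℕ and let Icc(L,R) with 0 ≤ L ≤ R < 2^k be a query range. Then Σ_{u=L}^{R} ((k + 1) + m·(N(u) + 1)) ≤ (R − L + 1)·(k + 1 + 4m). Under the cost model in which, for each in-range object u, the edge-selection procedure traverses at most k+1 levels of the segment tree paying unit cost at each skipped level and cost m at each level where it collects edges (the active levels of u plus the final level whose segment is contained in the query range), this states that the amortized cost per object of constructing its edges in the dedicated graph is O(m + log n), which is the content of Theorem 2. -/

import Mathlib

/-- The level-`i`, index-`j` dyadic interval of the segment tree over `{0,...,2^k-1}`,
as a finset. -/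
def dyadic (k i j : ℕ) : Finset ℕ := Finset.Ico (j * 2 ^ (k - i)) ((j + 1) * 2 ^ (k - i))

/-- The unique level-`i` dyadic interval containing `u`, namely `D(i, ⌊u/2^(k-i)⌋)`. -/
def seg (k i u : ℕ) : Finset ℕ := dyadic k i (u / 2 ^ (k - i))

/-- The number of active levels for `u` with respect to the query range `Icc L R`:
levels `i < k` such that `s_i(u)` is not contained in `Icc L R` and
`s_i(u) ∩ Icc L R ≠ s_{i+1}(u) ∩ Icc L R`. -/
def numActive (k L R u : ℕ) : ℕ :=
  ((Finset.range k).filter (fun i =>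
    ¬ seg k i u ⊆ Finset.Icc L R ∧
    seg k i u ∩ Finset.Icc L R ≠ seg k (i + 1) u ∩ Finset.Icc L R)).card

lemma seg_succ_succ (k i u : ℕ) : seg (k + 1) (i + 1) u = seg k i u := by
  simp [seg, dyadic, Nat.succ_sub_succ]

lemma seg_lt {k i u x : ℕ} (hu : u < 2 ^ k) (hx : x ∈ seg k i u) : x < 2 ^ k := by
  have hek : k - i ≤ k := Nat.sub_le _ _
  simp only [seg, dyadic, Finset.mem_Ico] at hx
  have hpow : 2 ^ (k - (k - i)) * 2 ^ (k - i) = 2 ^ k := by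
    rw [← pow_add, Nat.sub_add_cancel hek]
  have h1 : u / 2 ^ (k - i) < 2 ^ (k - (k - i)) := by
    apply Nat.div_lt_of_lt_mul
    rw [mul_comm, hpow]
    exact hu
  calc x < (u / 2 ^ (k - i) + 1) * 2 ^ (k - i) := hx.2
    _ ≤ 2 ^ (k - (k - i)) * 2 ^ (k - i) := Nat.mul_le_mul_right _ h1
    _ = 2 ^ k := hpow

lemma seg_ge {k i u x : ℕ} (hu : 2 ^ k ≤ u) (hx : x ∈ seg k i u) : 2 ^ k ≤ x := by
  have hek : k - i ≤ k := Nat.sub_le _ _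
  simp only [seg, dyadic, Finset.mem_Ico] at hx
  have hpow : 2 ^ (k - (k - i)) * 2 ^ (k - i) = 2 ^ k := by
    rw [← pow_add, Nat.sub_add_cancel hek]
  have h1 : 2 ^ (k - (k - i)) ≤ u / 2 ^ (k - i) := by
    rw [Nat.le_div_iff_mul_le (Nat.pow_pos (by norm_num))]
    rwa [hpow]
  calc 2 ^ k = 2 ^ (k - (k - i)) * 2 ^ (k - i) := hpow.symm
    _ ≤ u / 2 ^ (k - i) * 2 ^ (k - i) := Nat.mul_le_mul_right _ h1
    _ ≤ x := hx.1

lemma numActive_congr {k L R L' R' u : ℕ}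
    (h : ∀ i x, x ∈ seg k i u → ((L ≤ x ∧ x ≤ R) ↔ (L' ≤ x ∧ x ≤ R'))) :
    numActive k L R u = numActive k L' R' u := by
  have hseg : ∀ i, seg k i u ∩ Finset.Icc L R = seg k i u ∩ Finset.Icc L' R' := by
    intro i
    ext x
    simp only [Finset.mem_inter, Finset.mem_Icc]
    constructor
    · rintro ⟨hx, h2⟩; exact ⟨hx, (h i x hx).1 h2⟩
    · rintro ⟨hx, h2⟩; exact ⟨hx, (h i x hx).2 h2⟩
  have hsub : ∀ i, (seg k i u ⊆ Finset.Icc L R) ↔ (seg k i u ⊆ Finset.Icc L' R') := by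
    intro i
    constructor
    · intro hs x hx
      have := hs hx
      simp only [Finset.mem_Icc] at this ⊢
      exact (h i x hx).1 this
    · intro hs x hx
      have := hs hx
      simp only [Finset.mem_Icc] at this ⊢
      exact (h i x hx).2 this
  unfold numActive
  congr 1
  apply Finset.filter_congr
  intro i _
  rw [hseg i, hseg (i + 1), hsub i]

lemma numActive_succ (k L R u : ℕ) :
    numActive (k + 1) L R u = numActive k L R u +
      (if (¬ seg (k + 1) 0 u ⊆ Finset.Icc L R ∧
           seg (k + 1) 0 u ∩ Finset.Icc L R ≠ seg (k + 1) 1 u ∩ Finset.Icc L R) then 1 else 0) := by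
  unfold numActive
  rw [Finset.card_filter, Finset.card_filter, Finset.sum_range_succ']
  congr 1
  apply Finset.sum_congr rfl
  intro i _
  rw [seg_succ_succ, seg_succ_succ]

lemma numActive_succ_le (k L R u : ℕ) :
    numActive (k + 1) L R u ≤ numActive k L R u + 1 := by
  rw [numActive_succ]
  split <;> omega

lemma numActive_full {k u : ℕ} (hu : u < 2 ^ k) : numActive k 0 (2 ^ k - 1) u = 0 := by
  unfold numActive
  rw [Finset.card_eq_zero, Finset.filter_eq_empty_iff]
  intro i _
  rintro ⟨hA, -⟩
  apply hA
  intro x hx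
  have h1 : x < 2 ^ k := seg_lt hu hx
  simp only [Finset.mem_Icc]
  omega

lemma seg_zero {k u : ℕ} (hu : u < 2 ^ k) : seg k 0 u = Finset.Ico 0 (2 ^ k) := by
  simp [seg, dyadic, Nat.div_eq_of_lt hu]

lemma cond0_left {k L R u : ℕ} (huR : u ≤ R) (hR : R < 2 ^ k) :
    numActive (k + 1) L R u = numActive k L R u := by
  have hp : (0:ℕ) < 2 ^ k := Nat.pow_pos (by norm_num)
  have hpp : 2 ^ (k + 1) = 2 * 2 ^ k := by ring
  have hu : u < 2 ^ k := lt_of_le_of_lt huR hR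
  have hu1 : u < 2 ^ (k + 1) := by omega
  rw [numActive_succ, if_neg, Nat.add_zero]
  rintro ⟨-, hne⟩
  apply hne
  have h0 : seg (k + 1) 0 u = Finset.Ico 0 (2 ^ (k + 1)) := seg_zero hu1
  have h1 : seg (k + 1) 1 u = Finset.Ico 0 (2 ^ k) := by
    rw [seg_succ_succ]; exact seg_zero hu
  rw [h0, h1, Finset.inter_eq_right.2, Finset.inter_eq_right.2]
  · intro x hx
    simp only [Finset.mem_Icc] at hx
    simp only [Finset.mem_Ico]
    omega
  · intro x hx
    simp only [Finset.mem_Icc] at hx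
    simp only [Finset.mem_Ico]
    omega

lemma cond0_right {k L R u : ℕ} (hL : 2 ^ k ≤ L) (hLu : L ≤ u) (huR : u ≤ R)
    (hR : R < 2 ^ (k + 1)) :
    numActive (k + 1) L R u = numActive k L R u := by
  have hp : (0:ℕ) < 2 ^ k := Nat.pow_pos (by norm_num)
  have hpp : 2 ^ (k + 1) = 2 * 2 ^ k := by ring
  have hu1 : u < 2 ^ (k + 1) := by omega
  rw [numActive_succ, if_neg, Nat.add_zero]
  rintro ⟨-, hne⟩
  apply hne
  have h0 : seg (k + 1) 0 u = Finset.Ico 0 (2 ^ (k + 1)) := seg_zero hu1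
  have h1 : seg (k + 1) 1 u = Finset.Ico (2 ^ k) (2 ^ (k + 1)) := by
    have hdiv : u / 2 ^ k = 1 := by
      apply Nat.div_eq_of_lt_le <;> push_cast <;> omega
    simp only [seg, dyadic, Nat.add_sub_cancel, hdiv]
    congr 1 <;> omega
  rw [h0, h1, Finset.inter_eq_right.2, Finset.inter_eq_right.2]
  · intro x hx
    simp only [Finset.mem_Icc] at hx
    simp only [Finset.mem_Ico]
    omega
  · intro x hx
    simp only [Finset.mem_Icc] at hx
    simp only [Finset.mem_Ico]
    omega

lemma numActive_left {k L R u : ℕ} (hu : u < 2 ^ k) (hR : 2 ^ k - 1 ≤ R) :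
    numActive k L R u = numActive k L (2 ^ k - 1) u := by
  apply numActive_congr
  intro i x hx
  have h1 : x < 2 ^ k := seg_lt hu hx
  have h2 : x ≤ 2 ^ k - 1 := Nat.le_pred_of_lt h1
  exact ⟨fun h => ⟨h.1, h2⟩, fun h => ⟨h.1, le_trans h2 hR⟩⟩

lemma numActive_right {k L R u : ℕ} (hu : 2 ^ k ≤ u) (hL : L ≤ 2 ^ k) :
    numActive k L R u = numActive k (2 ^ k) R u := by
  apply numActive_congr
  intro i x hx
  have h1 : 2 ^ k ≤ x := seg_ge hu hx
  exact ⟨fun h => ⟨h1, h.2⟩, fun h => ⟨le_trans hL h1, h.2⟩⟩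

lemma seg_shift {k i : ℕ} (u : ℕ) (hik : i ≤ k) :
    seg k i (2 ^ k + u) = (seg k i u).image (2 ^ k + ·) := by
  have hpos : (0:ℕ) < 2 ^ (k - i) := Nat.pow_pos (by norm_num)
  have hsplit : 2 ^ k = 2 ^ i * 2 ^ (k - i) := by
    rw [← pow_add, Nat.add_sub_cancel' hik]
  simp only [seg, dyadic]
  rw [Finset.image_add_left_Ico]
  have hdiv : (2 ^ k + u) / 2 ^ (k - i) = 2 ^ i + u / 2 ^ (k - i) := by
    rw [hsplit, add_comm, Nat.add_mul_div_right _ _ hpos, add_comm]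
  rw [hdiv]
  congr 1
  · rw [add_mul, ← hsplit]
  · rw [show 2 ^ i + u / 2 ^ (k - i) + 1 = 2 ^ i + (u / 2 ^ (k - i) + 1) by ring, add_mul,
      ← hsplit]

lemma numActive_shift (k L R u : ℕ) :
    numActive k (2 ^ k + L) (2 ^ k + R) (2 ^ k + u) = numActive k L R u := by
  have hinj : Function.Injective (2 ^ k + · : ℕ → ℕ) := fun a b h => by
    simpa using h
  unfold numActive
  congr 1
  apply Finset.filter_congr
  intro i hi
  rw [Finset.mem_range] at hi
  have h1 : seg k i (2 ^ k + u) = (seg k i u).image (2 ^ k + ·) := seg_shift u hi.le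
  have h2 : seg k (i + 1) (2 ^ k + u) = (seg k (i + 1) u).image (2 ^ k + ·) := seg_shift u hi
  have hI : Finset.Icc (2 ^ k + L) (2 ^ k + R) = (Finset.Icc L R).image (2 ^ k + ·) :=
    (Finset.image_add_left_Icc _ _ _).symm
  rw [h1, h2, hI, ← Finset.image_inter _ _ hinj, ← Finset.image_inter _ _ hinj,
    Finset.image_subset_image_iff hinj, ne_eq, (Finset.image_injective hinj).eq_iff]

/-- Auxiliary: total number of active levels over the range. -/
def Ftot (k L R : ℕ) : ℕ := ∑ u ∈ Finset.Icc L R, numActive k L R u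

lemma Ftot_shift (k L R : ℕ) : Ftot k (2 ^ k + L) (2 ^ k + R) = Ftot k L R := by
  unfold Ftot
  rw [← Finset.image_add_left_Icc,
    Finset.sum_image (fun a _ b _ h => by simpa using h)]
  exact Finset.sum_congr rfl fun u _ => numActive_shift k L R u

lemma Ftot_full (k : ℕ) : Ftot k 0 (2 ^ k - 1) = 0 := by
  have hp : (0:ℕ) < 2 ^ k := Nat.pow_pos (by norm_num)
  unfold Ftot
  apply Finset.sum_eq_zero
  intro u hu
  rw [Finset.mem_Icc] at hu
  exact numActive_full (by omega)

lemma Ftot_low {k L R : ℕ} (hR : R < 2 ^ k) : Ftot (k + 1) L R = Ftot k L R :=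
  Finset.sum_congr rfl fun u hu => by
    rw [Finset.mem_Icc] at hu
    exact cond0_left hu.2 hR

lemma Ftot_high {k L' R' : ℕ} (hR' : R' < 2 ^ k) :
    Ftot (k + 1) (2 ^ k + L') (2 ^ k + R') = Ftot k L' R' := by
  have step : Ftot (k + 1) (2 ^ k + L') (2 ^ k + R') = Ftot k (2 ^ k + L') (2 ^ k + R') :=
    Finset.sum_congr rfl fun u hu => by
      rw [Finset.mem_Icc] at hu
      exact cond0_right (by omega) hu.1 hu.2 (by omega)
  rw [step, Ftot_shift]

lemma Ftot_straddle {k L R : ℕ} (hL : L < 2 ^ k) (hR2 : 2 ^ k ≤ R) (hR : R < 2 ^ (k + 1)) :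
    Ftot (k + 1) L R ≤ Ftot k L (2 ^ k - 1) + Ftot k 0 (R - 2 ^ k) + (R - L + 1) := by
  have hp : (0:ℕ) < 2 ^ k := Nat.pow_pos (by norm_num)
  have hsplit : Finset.Icc L R = Finset.Icc L (2 ^ k - 1) ∪ Finset.Icc (2 ^ k) R := by
    ext x
    simp only [Finset.mem_Icc, Finset.mem_union]
    omega
  have hdisj : Disjoint (Finset.Icc L (2 ^ k - 1)) (Finset.Icc (2 ^ k) R) := by
    rw [Finset.disjoint_left]
    intro x hx hx'
    simp only [Finset.mem_Icc] at hx hx'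
    omega
  have hleft : ∑ u ∈ Finset.Icc L (2 ^ k - 1), numActive (k + 1) L R u
      ≤ Ftot k L (2 ^ k - 1) + (2 ^ k - L) := by
    calc ∑ u ∈ Finset.Icc L (2 ^ k - 1), numActive (k + 1) L R u
        ≤ ∑ u ∈ Finset.Icc L (2 ^ k - 1), (numActive k L (2 ^ k - 1) u + 1) := by
          apply Finset.sum_le_sum
          intro u hu
          rw [Finset.mem_Icc] at hu
          have hu' : u < 2 ^ k := by omega
          rw [← numActive_left (R := R) hu' (by omega)]
          exact numActive_succ_le k L R u
      _ = Ftot k L (2 ^ k - 1) + (2 ^ k - L) := by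
          rw [Finset.sum_add_distrib, Finset.sum_const, smul_eq_mul, mul_one, Nat.card_Icc]
          congr 1
          omega
  have hRR : Ftot k (2 ^ k) R = Ftot k 0 (R - 2 ^ k) := by
    obtain ⟨R', rfl⟩ : ∃ R', R = 2 ^ k + R' := ⟨R - 2 ^ k, by omega⟩
    simpa using Ftot_shift k 0 R'
  have hright : ∑ u ∈ Finset.Icc (2 ^ k) R, numActive (k + 1) L R u
      ≤ Ftot k 0 (R - 2 ^ k) + (R + 1 - 2 ^ k) := by
    calc ∑ u ∈ Finset.Icc (2 ^ k) R, numActive (k + 1) L R u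
        ≤ ∑ u ∈ Finset.Icc (2 ^ k) R, (numActive k (2 ^ k) R u + 1) := by
          apply Finset.sum_le_sum
          intro u hu
          rw [Finset.mem_Icc] at hu
          rw [← numActive_right hu.1 hL.le]
          exact numActive_succ_le k L R u
      _ = Ftot k (2 ^ k) R + (R + 1 - 2 ^ k) := by
          rw [Finset.sum_add_distrib, Finset.sum_const, smul_eq_mul, mul_one, Nat.card_Icc]
          rfl
      _ = Ftot k 0 (R - 2 ^ k) + (R + 1 - 2 ^ k) := by rw [hRR]
  have expand : Ftot (k + 1) L R
      = (∑ u ∈ Finset.Icc L (2 ^ k - 1), numActive (k + 1) L R u)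
        + (∑ u ∈ Finset.Icc (2 ^ k) R, numActive (k + 1) L R u) := by
    unfold Ftot
    rw [hsplit, Finset.sum_union hdisj]
  omega

lemma Ftot_suffix : ∀ k L, L < 2 ^ k → Ftot k L (2 ^ k - 1) ≤ 2 * (2 ^ k - L) := by
  intro k
  induction k with
  | zero =>
    intro L hL
    interval_cases L
    simp [Ftot, numActive]
  | succ k ih =>
    intro L hL
    rcases Nat.eq_zero_or_pos L with rfl | hL0
    · rw [Ftot_full]
      exact Nat.zero_le _
    rcases lt_or_ge L (2 ^ k) with h1 | h1
    · have h2 : 2 ^ (k + 1) - 1 - 2 ^ k = 2 ^ k - 1 := by omega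
      have hst := Ftot_straddle (k := k) (R := 2 ^ (k + 1) - 1) h1 (by omega) (by omega)
      rw [h2, Ftot_full] at hst
      have hs := ih L h1
      omega
    · obtain ⟨L', rfl⟩ : ∃ L', L = 2 ^ k + L' := ⟨L - 2 ^ k, by omega⟩
      have h2 : 2 ^ (k + 1) - 1 = 2 ^ k + (2 ^ k - 1) := by omega
      rw [h2, Ftot_high (L' := L') (R' := 2 ^ k - 1) (by omega)]
      have := ih L' (by omega)
      omega

lemma Ftot_prefix : ∀ k R, R < 2 ^ k → Ftot k 0 R ≤ 2 * (R + 1) := by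
  intro k
  induction k with
  | zero =>
    intro R hR
    interval_cases R
    simp [Ftot, numActive]
  | succ k ih =>
    intro R hR
    rcases lt_or_ge R (2 ^ k) with h1 | h1
    · rw [Ftot_low h1]
      exact ih R h1
    rcases eq_or_lt_of_le (show R ≤ 2 ^ (k + 1) - 1 by omega) with rfl | h2
    · rw [Ftot_full]
      exact Nat.zero_le _
    · have hst := Ftot_straddle (k := k) (L := 0) (by positivity) h1 hR
      rw [Ftot_full] at hst
      have hp := ih (R - 2 ^ k) (by omega)
      omega

lemma Ftot_main : ∀ k L R, L ≤ R → R < 2 ^ k → Ftot k L R ≤ 3 * (R - L + 1) := by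
  intro k
  induction k with
  | zero =>
    intro L R h1 h2
    obtain rfl : R = 0 := by omega
    obtain rfl : L = 0 := by omega
    simp [Ftot, numActive]
  | succ k ih =>
    intro L R hLR hR
    rcases lt_or_ge R (2 ^ k) with h1 | h1
    · rw [Ftot_low h1]
      exact ih L R hLR h1
    rcases lt_or_ge L (2 ^ k) with h2 | h2
    · have hst := Ftot_straddle h2 h1 hR
      have ha := Ftot_suffix k L h2
      have hb := Ftot_prefix k (R - 2 ^ k) (by omega)
      omega
    · obtain ⟨L', rfl⟩ : ∃ L', L = 2 ^ k + L' := ⟨L - 2 ^ k, by omega⟩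
      obtain ⟨R', rfl⟩ : ∃ R', R = 2 ^ k + R' := ⟨R - 2 ^ k, by omega⟩
      rw [Ftot_high (L' := L') (R' := R') (by omega)]
      have := ih L' R' (by omega) (by omega)
      omega

/-- Amortized cost of edge selection: paying unit cost at each of the at most
`k+1` levels and cost `m` at each edge-collecting level (the active levels plus
one final level), the total over all in-range objects is at most
`(R - L + 1)·(k + 1 + 4m)`, i.e., `O(m + log n)` per object. -/
theorem edge_selection_amortized (k m L R : ℕ) (hLR : L ≤ R) (hR : R < 2 ^ k) :
    ∑ u ∈ Finset.Icc L R, ((k + 1) + m * (numActive k L R u + 1))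
      ≤ (R - L + 1) * (k + 1 + 4 * m) := by
  have hF : Ftot k L R ≤ 3 * (R - L + 1) := Ftot_main k L R hLR hR
  have hcard : (Finset.Icc L R).card = R - L + 1 := by
    rw [Nat.card_Icc]; omega
  have hsum : ∑ u ∈ Finset.Icc L R, ((k + 1) + m * (numActive k L R u + 1))
      = (R - L + 1) * (k + 1) + m * (Ftot k L R + (R - L + 1)) := by
    rw [Finset.sum_add_distrib, Finset.sum_const, smul_eq_mul, hcard, ← Finset.mul_sum]
    congr 1
    rw [Finset.sum_add_distrib, Finset.sum_const, smul_eq_mul, hcard, mul_one]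
    simp [Ftot]
  rw [hsum]
  have h4 : m * (Ftot k L R + (R - L + 1)) ≤ m * (4 * (R - L + 1)) := by
    apply Nat.mul_le_mul_left
    omega
  calc (R - L + 1) * (k + 1) + m * (Ftot k L R + (R - L + 1))
      ≤ (R - L + 1) * (k + 1) + m * (4 * (R - L + 1)) := by omega
    _ = (R - L + 1) * (k + 1 + 4 * m) := by ring
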